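/- Let q be a prime power, n = 4k, δ ∈ F_{q^n}, and g(x) = Σ_{i=1}^k x^{q^{2(i−1)} + q^{2(i−1)+2k}}. Then for any nonzero a ∈ F_q, the polynomial f(x) = g(x^q − x + δ) + a·x permutes F_{q^n} if and only if Tr(δ) ≠ a. -/

import Mathlib

open Finset Polynomial

/-!
Write `σ` for the `q`-Frobenius, `S` for the trace from `𝔽_{q^n}` to `𝔽_{q^2}` (so that
`Tr = S + σ ∘ S`) and `f x = g (x^q - x + δ) + a x`. For `d ∈ 𝔽_{q^2}` one has
`g (v + d) = g v + d S(v) + k d²`, hence for `c ∈ 𝔽_{q^2}` and `d = c^q - c`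
`f (y + c) - f y = d (σ (S y) - S y + S δ) + k d² + a c =: E`.
A collision `f (y + c) = f y` forces `c ∈ 𝔽_{q^2}`, since `g` takes values in `𝔽_{q^2}`; then
`E = 0` and `σ E - E = d (a - Tr δ)`, so collisions exist only if `Tr δ = a`. Conversely, if
`Tr δ = a`, take `d ≠ 0` with `d^q = -d`, then `c` with `c^q - c = d` (additive Hilbert 90,
as `Tr d = 0`) and `y` with `σ (S y) - S y = -(S δ + k d + a c / d)`: this makes `E = 0`.
These three equations are solvable by counting, the kernel of an additive polynomial map being
bounded by the degree of the polynomial.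
-/

theorem Finset.sum_range_two_mul {M : Type*} [AddCommMonoid M] (f : ℕ → M) (m : ℕ) :
    ∑ i ∈ range (2 * m), f i = ∑ i ∈ range m, (f (2 * i) + f (2 * i + 1)) := by
  induction m with
  | zero => simp
  | succ m ih => rw [Nat.mul_succ, sum_range_succ, sum_range_succ, sum_range_succ, ih, add_assoc]

theorem one_lt_pow_and_ne_zero_of_card_eq {α : Type*} [Fintype α] [Nontrivial α] {p e n : ℕ}
    (h : Fintype.card α = p ^ (e * n)) : 1 < p ^ e ∧ n ≠ 0 := by
  have h1 := Fintype.one_lt_card (α := α)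
  rw [h, pow_mul] at h1
  refine ⟨?_, ?_⟩
  · by_contra h'
    exact h1.not_ge (pow_le_one₀ (Nat.zero_le _) (not_lt.mp h'))
  · rintro rfl
    simp at h1

theorem AddMonoidHom.le_card_range {G H : Type*} [AddGroup G] [AddGroup H] [Finite G]
    (f : G →+ H) {b m : ℕ} (hf : Nat.card f.ker ≤ m) (hG : Nat.card G = b * m) :
    b ≤ Nat.card f.range := by
  have hcard : Nat.card f.ker * Nat.card f.range = Nat.card G := by
    rw [← AddSubgroup.index_ker, f.ker.card_mul_index]
  refine Nat.le_of_mul_le_mul_right ?_ (Nat.card_pos.trans_le hf)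
  calc b * m = Nat.card f.range * Nat.card f.ker := by rw [← hG, ← hcard, mul_comm]
    _ ≤ Nat.card f.range * m := Nat.mul_le_mul_left _ hf

theorem AddMonoidHom.range_eq_ker_of_card_le {G H K : Type*} [AddGroup G] [AddGroup H]
    [AddGroup K] [Finite G] [Finite H] (f : G →+ H) (g : H →+ K) (hgf : ∀ x, g (f x) = 0)
    {b m : ℕ} (hf : Nat.card f.ker ≤ m) (hg : Nat.card g.ker ≤ b) (hG : Nat.card G = b * m) :
    f.range = g.ker :=
  AddSubgroup.eq_of_le_of_card_ge (by rintro _ ⟨x, rfl⟩; exact hgf x)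
    (hg.trans (f.le_card_range hf hG))

theorem card_ker_le_natDegree {R : Type*} [CommRing R] [IsDomain R] (f : R →+ R) {P : R[X]}
    (hP : P ≠ 0) (hf : ∀ x, f x = P.eval x) : Nat.card f.ker ≤ P.natDegree := by
  classical
  calc Nat.card f.ker = (f.ker : Set R).ncard := (Nat.card_coe_set_eq _).symm
    _ ≤ (P.roots.toFinset : Set R).ncard :=
        Set.ncard_le_ncard (fun x hx => by simpa [hP, hf] using hx) (finite_toSet _)
    _ = P.roots.toFinset.card := Set.ncard_coe_finset _
    _ ≤ P.natDegree := (Multiset.toFinset_card_le _).trans (card_roots' P)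

theorem card_ker_le_of_eq_sum_pow {R : Type*} [CommRing R] [IsDomain R] (f : R →+ R) {q N : ℕ}
    (hq : 1 < q) (c : ℕ → R) (hc : c N ≠ 0)
    (hf : ∀ x, f x = ∑ i ∈ range (N + 1), c i * x ^ q ^ i) : Nat.card f.ker ≤ q ^ N := by
  set P : R[X] := ∑ i ∈ range (N + 1), C (c i) * X ^ q ^ i
  have hcoeff : P.coeff (q ^ N) = c N := by
    simp only [P, finsetSum_coeff, coeff_C_mul_X_pow, (Nat.pow_right_injective hq).eq_iff]
    simp
  have hP : P ≠ 0 := fun h => hc (by rw [← hcoeff, h, coeff_zero])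
  refine (card_ker_le_natDegree f hP fun x => by simp [P, hf, eval_finsetSum]).trans ?_
  refine natDegree_sum_le_of_forall_le _ _ fun i hi => (natDegree_C_mul_X_pow_le _ _).trans ?_
  exact Nat.pow_le_pow_right (by omega) (Nat.lt_succ_iff.mp (mem_range.mp hi))

section Collision

variable {F : Type*} [Field F] {σ : F →+* F} {S : F →+ F} {G : F → F} {κ a δ : F}

variable (σ G a δ) in
def frobSubMap (x : F) : F := G (σ x - x + δ) + a * x

theorem frobSubMap_add (hSσ : ∀ x, S (σ x) = σ (S x))
    (hG : ∀ v d, σ (σ d) = d → G (v + d) = G v + d * S v + κ * d ^ 2)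
    {c : F} (hc : σ (σ c) = c) (y : F) :
    frobSubMap σ G a δ (y + c) = frobSubMap σ G a δ y +
      ((σ c - c) * (σ (S y) - S y + S δ) + κ * (σ c - c) ^ 2 + a * c) := by
  have hd : σ (σ (σ c - c)) = σ c - c := by simp only [map_sub, hc]
  have hu : σ (y + c) - (y + c) + δ = (σ y - y + δ) + (σ c - c) := by rw [map_add]; ring
  rw [frobSubMap, frobSubMap, hu, hG _ _ hd]
  simp only [map_add, map_sub, hSσ]
  ring

theorem frobSubMap_injective (hσa : σ a = a) (ha : a ≠ 0) (hκ : σ κ = κ)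
    (hSσ : ∀ x, S (σ x) = σ (S x)) (hσσS : ∀ x, σ (σ (S x)) = S x)
    (hσσG : ∀ x, σ (σ (G x)) = G x)
    (hG : ∀ v d, σ (σ d) = d → G (v + d) = G v + d * S v + κ * d ^ 2)
    (hδ : S δ + σ (S δ) ≠ a) :
    Function.Injective (frobSubMap σ G a δ) := by
  intro x y hxy
  obtain ⟨c, rfl⟩ : ∃ c, x = y + c := ⟨x - y, by ring⟩
  have hc : σ (σ c) = c := by
    have hac : a * c = G (σ y - y + δ) - G (σ (y + c) - (y + c) + δ) := by
      simp only [frobSubMap] at hxy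
      linear_combination hxy
    have := congrArg (fun z => σ (σ z)) hac
    simp only [map_mul, map_sub, hσa, hσσG] at this
    rw [← hac] at this
    exact mul_left_cancel₀ ha this
  set d := σ c - c
  have hσd : σ d = -d := by simp only [d, map_sub, hc]; ring
  have hσc : σ c = c + d := by ring
  set w := σ (S y) - S y
  have hσw : σ w = -w := by simp only [w, map_sub, hσσS]; ring
  have hE : d * (w + S δ) + κ * d ^ 2 + a * c = 0 := by
    rw [frobSubMap_add hSσ hG hc] at hxy
    linear_combination hxy
  have hσE := congrArg σ hE
  simp only [map_add, map_mul, map_pow, map_zero, hσd, hσw, hσa, hκ, hσc] at hσE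
  have hd : d * (a - (S δ + σ (S δ))) = 0 := by linear_combination hσE - hE
  have hd0 : d = 0 := (mul_eq_zero.mp hd).resolve_right (sub_ne_zero.mpr hδ.symm)
  rw [hd0] at hE
  have : c = 0 := by simpa [ha] using hE
  simp [this]

theorem frobSubMap_not_injective (hσa : σ a = a) (hκ : σ κ = κ)
    (hSσ : ∀ x, S (σ x) = σ (S x))
    (hG : ∀ v d, σ (σ d) = d → G (v + d) = G v + d * S v + κ * d ^ 2)
    {c d : F} (hd0 : d ≠ 0) (hσd : σ d = -d) (hcd : σ c - c = d)
    (hS : ∀ w, σ w = -w → ∃ y, σ (S y) - S y = w)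
    (hδ : S δ + σ (S δ) = a) :
    ¬ Function.Injective (frobSubMap σ G a δ) := by
  have hσc : σ c = c + d := by rw [← hcd]; ring
  have hc : σ (σ c) = c := by rw [hσc, map_add, hσc, hσd]; ring
  have hc0 : c ≠ 0 := by rintro rfl; simp at hcd; exact hd0 hcd.symm
  set m := S δ + κ * d + a * c / d
  have hσm : σ (-m) = -(-m) := by
    simp only [m, map_neg, map_add, map_mul, map_div₀, hκ, hσa, hσd, hσc]
    field_simp
    linear_combination (-d) * hδ
  obtain ⟨y, hy⟩ := hS _ hσm
  intro hinj
  have := @hinj (y + c) y (by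
    rw [frobSubMap_add hSσ hG hc, hcd, hy]
    simp only [m]
    field_simp
    ring)
  exact hc0 (by linear_combination this)

end Collision

section FrobTrace

variable {R : Type*} [CommRing R] (p : ℕ) [ExpChar R p]

/-- For `Fintype.card R = p ^ (e * m)` this is the trace to the subfield of order `p ^ e`. -/
def frobTrace (e m : ℕ) : R →+ R :=
  ∑ i ∈ range m, (iterateFrobenius R p (e * i)).toAddMonoidHom

variable {p}

theorem frobTrace_apply (e m : ℕ) (x : R) :
    frobTrace p e m x = ∑ i ∈ range m, iterateFrobenius R p (e * i) x := by
  simp [frobTrace]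

theorem iterateFrobenius_frobTrace (e' e m : ℕ) (x : R) :
    iterateFrobenius R p e' (frobTrace p e m x) = frobTrace p e m (iterateFrobenius R p e' x) := by
  simp only [frobTrace_apply, map_sum, ← iterateFrobenius_add_apply, add_comm]

theorem iterateFrobenius_frobTrace_sub (e m : ℕ) (x : R) :
    iterateFrobenius R p e (frobTrace p e m x) - frobTrace p e m x =
      iterateFrobenius R p (e * m) x - x := by
  have htel := sum_range_sub (fun i => iterateFrobenius R p (e * i) x) m
  simp only [mul_zero, iterateFrobenius_zero_apply] at htel
  rw [frobTrace_apply, map_sum, ← sum_sub_distrib, ← htel]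
  refine sum_congr rfl fun i _ => ?_
  rw [← iterateFrobenius_add_apply, mul_add_one, add_comm]

theorem frobTrace_two_mul (e m : ℕ) (x : R) :
    frobTrace p e (2 * m) x =
      frobTrace p (2 * e) m x + iterateFrobenius R p e (frobTrace p (2 * e) m x) := by
  rw [frobTrace_apply, sum_range_two_mul, sum_add_distrib, iterateFrobenius_frobTrace,
    frobTrace_apply, frobTrace_apply]
  simp only [← iterateFrobenius_add_apply]
  congr 1 <;> refine sum_congr rfl fun i _ => by ring_nf

theorem iterateFrobenius_iterateFrobenius_frobTrace {e m : ℕ} {x : R}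
    (hx : iterateFrobenius R p (2 * e * m) x = x) :
    iterateFrobenius R p e (iterateFrobenius R p e (frobTrace p (2 * e) m x)) =
      frobTrace p (2 * e) m x := by
  have h := iterateFrobenius_frobTrace_sub (p := p) (2 * e) m x
  rwa [hx, sub_self, sub_eq_zero, two_mul e, iterateFrobenius_add_apply, ← two_mul] at h

theorem frobTrace_two_mul_eq_zero {e : ℕ} (m : ℕ) {d : R} (hd : iterateFrobenius R p e d = -d) :
    frobTrace p e (2 * m) d = 0 := by
  rw [frobTrace_two_mul, iterateFrobenius_frobTrace, hd, map_neg, add_neg_cancel]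

def conjPairSum (q k : ℕ) (x : R) : R := ∑ i ∈ range k, x ^ (q ^ (2 * i) + q ^ (2 * i + 2 * k))

theorem conjPairSum_eq (e k : ℕ) (x : R) :
    conjPairSum (p ^ e) k x = ∑ i ∈ range k,
      iterateFrobenius R p (2 * e * i) x * iterateFrobenius R p (2 * e * (i + k)) x := by
  refine sum_congr rfl fun i _ => ?_
  rw [pow_add, iterateFrobenius_def, iterateFrobenius_def, ← pow_mul, ← pow_mul]
  ring_nf

theorem conjPairSum_add {e : ℕ} (k : ℕ) (v : R) {d : R}
    (hd : iterateFrobenius R p e (iterateFrobenius R p e d) = d) :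
    conjPairSum (p ^ e) k (v + d) =
      conjPairSum (p ^ e) k v + d * frobTrace p (2 * e) (2 * k) v + k * d ^ 2 := by
  have hdi (i : ℕ) : iterateFrobenius R p (2 * e * i) d = d := by
    rw [iterateFrobenius_mul_apply]
    exact Function.iterate_fixed (by rwa [two_mul, iterateFrobenius_add_apply]) i
  have hterm (s t : R) : (s + d) * (t + d) = s * t + d * (s + t) + d ^ 2 := by ring
  simp only [conjPairSum_eq, frobTrace_apply, map_add, hdi, hterm, sum_add_distrib, ← mul_sum,
    sum_const, card_range, nsmul_eq_mul, two_mul k, sum_range_add]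
  simp only [add_comm k, mul_comm (2 * e), mul_comm (k : R)]

theorem iterateFrobenius_iterateFrobenius_conjPairSum {e k : ℕ} {x : R}
    (hx : iterateFrobenius R p (e * (4 * k)) x = x) :
    iterateFrobenius R p e (iterateFrobenius R p e (conjPairSum (p ^ e) k x)) =
      conjPairSum (p ^ e) k x := by
  set t : ℕ → R := fun i =>
    iterateFrobenius R p (2 * e * i) x * iterateFrobenius R p (2 * e * (i + k)) x
  have htel := sum_range_sub t k
  have hwrap : t k = t 0 := by
    simp only [t, mul_zero, zero_add, iterateFrobenius_zero_apply]
    rw [show 2 * e * (k + k) = e * (4 * k) by ring, hx, mul_comm]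
  rw [hwrap, sub_self] at htel
  rw [← sub_eq_zero, conjPairSum_eq, map_sum, map_sum, ← sum_sub_distrib, ← htel]
  refine sum_congr rfl fun i _ => ?_
  simp only [t, map_mul, ← iterateFrobenius_add_apply]
  ring_nf

end FrobTrace

section FiniteField

variable {F : Type*} [Field F] {p : ℕ} [ExpChar F p] {e : ℕ}

theorem card_ker_iterateFrobenius_sub_le (hq : 1 < p ^ e) :
    Nat.card ((iterateFrobenius F p e).toAddMonoidHom - AddMonoidHom.id F).ker ≤ p ^ e := by
  refine (card_ker_le_of_eq_sum_pow _ hq (fun i => if i = 0 then -1 else 1) (N := 1)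
    (by simp) fun x => ?_).trans_eq (pow_one _)
  simp [sum_range_succ, iterateFrobenius_def, sub_eq_neg_add]

theorem card_ker_iterateFrobenius_add_le (hq : 1 < p ^ e) :
    Nat.card ((iterateFrobenius F p e).toAddMonoidHom + AddMonoidHom.id F).ker ≤ p ^ e := by
  refine (card_ker_le_of_eq_sum_pow _ hq (fun _ => 1) (N := 1)
    one_ne_zero fun x => ?_).trans_eq (pow_one _)
  simp [sum_range_succ, iterateFrobenius_def, add_comm]

theorem card_ker_frobTrace_le (hq : 1 < p ^ e) {n : ℕ} (hn : n ≠ 0) :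
    Nat.card (frobTrace (R := F) p e n).ker ≤ (p ^ e) ^ (n - 1) :=
  card_ker_le_of_eq_sum_pow _ hq (fun _ => 1) one_ne_zero fun x => by
    simp [Nat.sub_add_cancel (Nat.one_le_iff_ne_zero.mpr hn), frobTrace_apply,
      iterateFrobenius_def, pow_mul]

theorem card_ker_iterateFrobenius_sub_comp_frobTrace_le (hq : 1 < p ^ e) {m : ℕ} (hm : m ≠ 0) :
    Nat.card (((iterateFrobenius F p e).toAddMonoidHom - AddMonoidHom.id F).comp
      (frobTrace p (2 * e) m)).ker ≤ (p ^ e) ^ (2 * m - 1) := by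
  refine card_ker_le_of_eq_sum_pow _ hq (fun i => (-1) ^ (i + 1)) (by simp) fun x => ?_
  rw [Nat.sub_add_cancel (by omega), sum_range_two_mul]
  simp [frobTrace_apply, map_sum, pow_succ, iterateFrobenius_def, ← pow_mul, ← sum_sub_distrib]
  exact sum_congr rfl fun i _ => by ring_nf

variable [Fintype F]

theorem iterateFrobenius_eq_self_of_card_eq {N : ℕ} (hF : Fintype.card F = p ^ N) (x : F) :
    iterateFrobenius F p N x = x := by
  rw [iterateFrobenius_def, ← hF, FiniteField.pow_card]

theorem exists_iterateFrobenius_sub_eq {n : ℕ} (hF : Fintype.card F = p ^ (e * n)) {d : F}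
    (hd : frobTrace p e n d = 0) : ∃ c, iterateFrobenius F p e c - c = d := by
  obtain ⟨hq, hn⟩ := one_lt_pow_and_ne_zero_of_card_eq hF
  have hexact := AddMonoidHom.range_eq_ker_of_card_le
    ((iterateFrobenius F p e).toAddMonoidHom - AddMonoidHom.id F) (frobTrace p e n)
    (fun x => by
      simp [← iterateFrobenius_frobTrace, iterateFrobenius_frobTrace_sub,
        iterateFrobenius_eq_self_of_card_eq hF])
    (card_ker_iterateFrobenius_sub_le hq) (card_ker_frobTrace_le hq hn)
    (by rw [Nat.card_eq_fintype_card, hF, pow_mul, ← pow_succ, Nat.sub_add_cancel (by omega)])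
  have hmem : d ∈ (frobTrace p e n).ker := hd
  rw [← hexact] at hmem
  obtain ⟨c, hc⟩ := hmem
  exact ⟨c, hc⟩

theorem exists_iterateFrobenius_frobTrace_sub_eq {m : ℕ} (hF : Fintype.card F = p ^ (e * (2 * m)))
    {w : F} (hw : iterateFrobenius F p e w = -w) :
    ∃ y, iterateFrobenius F p e (frobTrace p (2 * e) m y) - frobTrace p (2 * e) m y = w := by
  obtain ⟨hq, hm⟩ := one_lt_pow_and_ne_zero_of_card_eq hF
  have hexact := AddMonoidHom.range_eq_ker_of_card_le
    (((iterateFrobenius F p e).toAddMonoidHom - AddMonoidHom.id F).comp (frobTrace p (2 * e) m))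
    ((iterateFrobenius F p e).toAddMonoidHom + AddMonoidHom.id F)
    (fun y => by
      have := iterateFrobenius_iterateFrobenius_frobTrace (e := e) (m := m)
        (iterateFrobenius_eq_self_of_card_eq (by rw [hF]; ring_nf) y)
      simp [this])
    (card_ker_iterateFrobenius_sub_comp_frobTrace_le hq (by omega))
    (card_ker_iterateFrobenius_add_le hq)
    (by rw [Nat.card_eq_fintype_card, hF, pow_mul, ← pow_succ', Nat.sub_add_cancel (by omega)])
  have hmem : w ∈ ((iterateFrobenius F p e).toAddMonoidHom + AddMonoidHom.id F).ker := by
    simp [hw]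
  rw [← hexact] at hmem
  obtain ⟨y, hy⟩ := hmem
  exact ⟨y, hy⟩

theorem exists_ne_zero_iterateFrobenius_eq_neg {m : ℕ} (hF : Fintype.card F = p ^ (e * (2 * m))) :
    ∃ d : F, d ≠ 0 ∧ iterateFrobenius F p e d = -d := by
  obtain ⟨hq, hm⟩ := one_lt_pow_and_ne_zero_of_card_eq hF
  by_contra! h
  have hker : (((iterateFrobenius F p e).toAddMonoidHom - AddMonoidHom.id F).comp
      (frobTrace p (2 * e) m)).ker = ⊤ := by
    refine eq_top_iff.mpr fun y _ => ?_
    by_contra hy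
    refine h _ hy ?_
    have := iterateFrobenius_iterateFrobenius_frobTrace (e := e) (m := m)
      (iterateFrobenius_eq_self_of_card_eq (by rw [hF]; ring_nf) y)
    simp [this]
  have hcard := card_ker_iterateFrobenius_sub_comp_frobTrace_le (F := F) hq (m := m) (by omega)
  rw [hker, AddSubgroup.card_top, Nat.card_eq_fintype_card, hF, pow_mul] at hcard
  exact hcard.not_gt (Nat.pow_lt_pow_right hq (by omega))

end FiniteField

theorem stmt_13_general (p e : ℕ) [Fact p.Prime] (q : ℕ) (hq : q = p ^ e)
    (F : Type) [Field F] [Fintype F] (k : ℕ) (n : ℕ) (hn : n = 4 * k)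
    (hF : Fintype.card F = q ^ n)
    (δ : F)
    (g : F → F) (hg : ∀ x, g x = ∑ i ∈ Finset.range k, x ^ (q ^ (2 * i) + q ^ (2 * i + 2 * k)))
    (Tr : F → F) (hTr : ∀ x, Tr x = ∑ i ∈ Finset.range n, x ^ q ^ i)
    (a : F) (haq : a ^ q = a) (ha : a ≠ 0) :
    Function.Bijective (fun x : F => g (x ^ q - x + δ) + a * x) ↔ Tr δ ≠ a := by
  subst hq hn
  have hF' : Fintype.card F = p ^ (e * (2 * (2 * k))) := by rw [hF, ← pow_mul]; ring_nf
  have : CharP F p := charP_of_card_eq_prime_pow hF'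
  obtain rfl : g = conjPairSum (p ^ e) k := funext hg
  set σ := iterateFrobenius F p e
  set S := frobTrace (R := F) p (2 * e) (2 * k)
  have hfix {N : ℕ} (hN : e * (2 * (2 * k)) = N) (x : F) : iterateFrobenius F p N x = x :=
    iterateFrobenius_eq_self_of_card_eq (hN ▸ hF') x
  have hσa : σ a = a := haq
  have hSσ (x : F) : S (σ x) = σ (S x) := (iterateFrobenius_frobTrace e _ _ x).symm
  have hσσS (x : F) : σ (σ (S x)) = S x :=
    iterateFrobenius_iterateFrobenius_frobTrace (hfix (by ring) x)
  have hσσG (x : F) : σ (σ (conjPairSum (p ^ e) k x)) = conjPairSum (p ^ e) k x :=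
    iterateFrobenius_iterateFrobenius_conjPairSum (hfix (by ring) x)
  have hG (v d : F) (hd : σ (σ d) = d) := conjPairSum_add k v hd
  have hTrδ : Tr δ = S δ + σ (S δ) := by
    rw [hTr, show 4 * k = 2 * (2 * k) by ring, ← frobTrace_two_mul, frobTrace_apply]
    simp [iterateFrobenius_def, pow_mul]
  change Function.Bijective (frobSubMap σ (conjPairSum (p ^ e) k) a δ) ↔ _
  rw [hTrδ, ← Finite.injective_iff_bijective]
  constructor
  · intro hinj hδ
    obtain ⟨d, hd0, hσd⟩ := exists_ne_zero_iterateFrobenius_eq_neg hF'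
    obtain ⟨c, hc⟩ := exists_iterateFrobenius_sub_eq hF' (frobTrace_two_mul_eq_zero _ hσd)
    exact frobSubMap_not_injective hσa (map_natCast σ k) hSσ hG hd0 hσd hc
      (fun w hw => exists_iterateFrobenius_frobTrace_sub_eq hF' hw) hδ hinj
  · exact frobSubMap_injective hσa ha (map_natCast σ k) hSσ hσσS hσσG hG

theorem stmt_13 (p e : ℕ) [Fact p.Prime] (he : 0 < e) (q : ℕ) (hq : q = p ^ e)
    (F : Type) [Field F] [Fintype F] (k : ℕ) (hk : 0 < k) (n : ℕ) (hn : n = 4 * k)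
    (hF : Fintype.card F = q ^ n)
    (δ : F)
    (g : F → F) (hg : ∀ x, g x = ∑ i ∈ Finset.range k, x ^ (q ^ (2 * i) + q ^ (2 * i + 2 * k)))
    (Tr : F → F) (hTr : ∀ x, Tr x = ∑ i ∈ Finset.range n, x ^ q ^ i)
    (a : F) (haq : a ^ q = a) (ha : a ≠ 0) :
    Function.Bijective (fun x : F => g (x ^ q - x + δ) + a * x) ↔ Tr δ ≠ a :=
  stmt_13_general p e q hq F k n hn hF δ g hg Tr hTr a haq ha
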